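/- arXiv:1912.09988 — 4 statements merged into one kernel-verified Lean document; each statement's English description precedes it below -/
import Mathlib

section
/- Let a ∈ (0, 1/2). Then ∫₀^{1−a} dr/(a + (1−r)²) + ∫_{1−a}^{1} dr/( a·log(1/a)/log(1/(1−r)) + (1−r)² ) ≲ 1/√a, i.e. there is an absolute constant C such that the sum of these two integrals is at most C/√a. -/
/-!
The first integral is an arctangent after the substitution `x = 1 - r`, hence at most `π / √a`.
In the second, `u = 1 - r ∈ (0, a]`, and dropping `u²` from the denominator bounds the integrand
by `log (1/u) / (a log (1/a))`; since `∫₀^a log (1/u) du = a (1 + log (1/a))`, the second integral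
is at most `1 + 1 / log (1/a) ≤ 1 + 1 / log 2`, which is bounded.
-/

open Real MeasureTheory intervalIntegral Set

lemma integral_one_div_add_sq {a : ℝ} (ha : 0 < a) (b c : ℝ) :
    ∫ x in b..c, 1 / (a + x ^ 2) = (arctan (c / √a) - arctan (b / √a)) / √a := by
  have hs : 0 < √a := sqrt_pos.2 ha
  have hrescale : ∀ x : ℝ, 1 / (a + x ^ 2) = a⁻¹ * (1 / (1 + (x / √a) ^ 2)) := by
    intro x
    rw [div_pow, sq_sqrt ha.le]
    field_simp
  simp_rw [hrescale, intervalIntegral.integral_const_mul,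
    integral_comp_div (fun y => 1 / (1 + y ^ 2)) hs.ne', integral_one_div_one_add_sq, smul_eq_mul]
  field_simp
  rw [sq_sqrt ha.le]

lemma integral_one_div_add_sq_le {a : ℝ} (ha : 0 < a) (b c : ℝ) :
    ∫ x in b..c, 1 / (a + x ^ 2) ≤ π / √a := by
  rw [integral_one_div_add_sq ha]
  gcongr
  linarith [arctan_lt_pi_div_two (c / √a), neg_pi_div_two_lt_arctan (b / √a)]

lemma one_div_div_log_add_sq_nonneg {A u : ℝ} (hA : 0 ≤ A) (hu0 : 0 ≤ u) (hu1 : u ≤ 1) :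
    0 ≤ 1 / (A / log (1 / u) + u ^ 2) := by
  have : 0 ≤ log (1 / u) := by
    rw [one_div, log_inv, neg_nonneg]
    exact log_nonpos hu0 hu1
  positivity

lemma one_div_div_log_add_sq_le {A u : ℝ} (hA : 0 < A) (hu0 : 0 ≤ u) (hu1 : u < 1) :
    1 / (A / log (1 / u) + u ^ 2) ≤ -log u / A := by
  rcases hu0.eq_or_lt with rfl | hu0
  · simp
  have hL : 0 < log (1 / u) := log_pos (one_lt_one_div hu0 hu1)
  rw [one_div u, log_inv] at hL ⊢
  calc 1 / (A / -log u + u ^ 2) ≤ 1 / (A / -log u) :=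
        one_div_le_one_div_of_le (by positivity) (le_add_of_nonneg_right (sq_nonneg u))
    _ = -log u / A := one_div_div _ _

lemma integral_one_div_div_log_add_sq_le {A a : ℝ} (hA : 0 < A) (ha0 : 0 ≤ a) (ha1 : a < 1) :
    ∫ u in 0..a, 1 / (A / log (1 / u) + u ^ 2) ≤ (a - a * log a) / A := by
  have hlog : IntervalIntegrable (fun u => -log u / A) volume 0 a :=
    intervalIntegrable_log'.neg.div_const A
  calc ∫ u in 0..a, 1 / (A / log (1 / u) + u ^ 2) ≤ ∫ u in 0..a, -log u / A := by
        rw [integral_of_le ha0, integral_of_le ha0]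
        refine setIntegral_mono_of_nonneg (fun u hu => ?_) (fun u hu => ?_)
          ((intervalIntegrable_iff_integrableOn_Ioc_of_le ha0).1 hlog)
        · exact one_div_div_log_add_sq_nonneg hA.le hu.1.le (by linarith [hu.2])
        · exact one_div_div_log_add_sq_le hA hu.1.le (by linarith [hu.2])
    _ = (a - a * log a) / A := by
        rw [intervalIntegral.integral_div, intervalIntegral.integral_neg, integral_log]
        simp

/-- there is an absolute constant C such that for all a ∈ (0,1/2),
∫₀^{1−a} dr/(a + (1−r)²) + ∫_{1−a}^{1} dr/(a·log(1/a)/log(1/(1−r)) + (1−r)²) ≤ C/√a. -/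
theorem stmt_3 : ∃ C : ℝ, 0 < C ∧ ∀ a : ℝ, 0 < a → a < 1 / 2 →
    (∫ r in (0 : ℝ)..(1 - a), 1 / (a + (1 - r) ^ 2)) +
      (∫ r in (1 - a)..1,
        1 / (a * Real.log (1 / a) / Real.log (1 / (1 - r)) + (1 - r) ^ 2))
      ≤ C / Real.sqrt a := by
  refine ⟨π + 3, by positivity, fun a ha ha2 => ?_⟩
  have hs : 0 < √a := sqrt_pos.2 ha
  have hs1 : √a ≤ 1 := sqrt_le_one.2 (by linarith)
  have hL : 1 / 2 ≤ log (1 / a) := by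
    have h2a : (2 : ℝ) ≤ 1 / a := by rw [le_div_iff₀ ha]; linarith
    linarith [log_le_log (by norm_num) h2a, log_two_gt_d9]
  have hfirst : ∫ r in (0 : ℝ)..(1 - a), 1 / (a + (1 - r) ^ 2) ≤ π / √a := by
    rw [integral_comp_sub_left (fun x => 1 / (a + x ^ 2)) 1]
    exact integral_one_div_add_sq_le ha _ _
  have hsecond : ∫ r in (1 - a)..1,
      1 / (a * log (1 / a) / log (1 / (1 - r)) + (1 - r) ^ 2) ≤ 3 := by
    rw [integral_comp_sub_left (fun u => 1 / (a * log (1 / a) / log (1 / u) + u ^ 2)) 1,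
      sub_self, sub_sub_cancel]
    calc _ ≤ (a - a * log a) / (a * log (1 / a)) :=
          integral_one_div_div_log_add_sq_le (mul_pos ha (by linarith)) ha.le (by linarith)
      _ = 1 + 1 / log (1 / a) := by
          rw [show log a = -log (1 / a) by rw [one_div, log_inv, neg_neg]]
          field_simp
          ring
      _ ≤ 3 := by
          have : 1 / log (1 / a) ≤ 2 := by rw [div_le_iff₀ (by linarith)]; linarith
          linarith
  calc _ ≤ π / √a + 3 / √a := add_le_add hfirst (hsecond.trans (le_div_self (by norm_num) hs hs1))
    _ = (π + 3) / √a := by ring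
end

section
/- Let E ⊂ T be a closed set with complementary arcs (a_n, b_n), i.e. T \ E = ⋃_n (a_n, b_n) where we identify T with parametrization e^{it}. Define the discrete measure μ = Σ_n (b_n − a_n)(δ_{a_n} + δ_{b_n}). If Σ_n (b_n − a_n) log(1/(b_n − a_n)) = +∞, then ∫_T log V₂(μ)(ζ) |dζ| = +∞, where V₂(μ)(ζ) = ∫_T dμ(e^{it})/|e^{it} − ζ|². -/
/-!
On the arc `(a m, b m)` the term of `V₂(μ)` coming from the endpoint `a m` alone gives
`V₂(μ)(e^{it}) ≥ (b m - a m) / |e^{i a m} - e^{it}|² ≥ 1 / (b m - a m)`, since a chord is shorter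
than its arc. Integrating `log V₂(μ) ≥ log (1 / (b m - a m))` over each arc and summing over the
disjoint arcs bounds the integral below by the divergent series.

The series defining `V₂(μ)` must also be shown to converge on the arcs (a divergent `tsum` is `0`):
all endpoints lie outside the arc, hence at chordal distance at least
`(2 / π) · dist(t, {a m, b m})` from `e^{it}`, and `Σ (b n - a n) ≤ 2π`.
-/

open MeasureTheory

/-- The point e^{it} on the unit circle. -/
noncomputable def circlePt (t : ℝ) : ℂ := Complex.exp (t * Complex.I)

/-- The potential V₂(μ)(e^{it}) = Σ_n (b_n − a_n)(1/|e^{ia_n} − e^{it}|² + 1/|e^{ib_n} − e^{it}|²)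
for the discrete measure μ = Σ_n (b_n − a_n)(δ_{a_n} + δ_{b_n}). -/
noncomputable def potV (a b : ℕ → ℝ) (t : ℝ) : ℝ :=
  ∑' n, (b n - a n) * (1 / ‖circlePt (a n) - circlePt t‖ ^ 2 +
    1 / ‖circlePt (b n) - circlePt t‖ ^ 2)

open Set Filter Real

lemma norm_circlePt_sub (s t : ℝ) :
    ‖circlePt s - circlePt t‖ = 2 * |sin ((s - t) / 2)| := by
  have h : circlePt s - circlePt t = circlePt t * (Complex.exp (Complex.I * ↑(s - t)) - 1) := by
    simp only [circlePt, mul_sub, mul_one, ← Complex.exp_add]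
    push_cast
    ring_nf
  rw [h, norm_mul, circlePt, Complex.norm_exp_ofReal_mul_I, one_mul,
    Complex.norm_exp_I_mul_ofReal_sub_one, norm_mul, Real.norm_eq_abs, Real.norm_eq_abs,
    abs_two]

lemma norm_circlePt_sub_le (s t : ℝ) : ‖circlePt s - circlePt t‖ ≤ |s - t| := by
  rw [norm_circlePt_sub]
  calc 2 * |sin ((s - t) / 2)| ≤ 2 * |(s - t) / 2| :=
        mul_le_mul_of_nonneg_left abs_sin_le_abs zero_le_two
    _ = |s - t| := by rw [abs_div, abs_two]; ring

lemma div_pi_le_abs_sin_half {x d : ℝ} (hd : 0 ≤ d) (hlow : d ≤ |x|) (hup : |x| ≤ 2 * π - d) :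
    d / π ≤ |sin (x / 2)| := by
  set y := |x| / 2 with hy_def
  have hy : |sin (x / 2)| = sin y := by
    have hsin : |sin (x / 2)| = |sin y| := by
      rcases abs_choice x with h | h <;> simp only [y, h, neg_div, sin_neg, abs_neg]
    rw [hsin, abs_of_nonneg (sin_nonneg_of_nonneg_of_le_pi (by positivity) (by linarith [hy_def]))]
  rw [hy]
  rcases le_total y (π / 2) with hle | hge
  · calc d / π ≤ 2 / π * y := by rw [div_mul_eq_mul_div]; gcongr; linarith [hy_def]
      _ ≤ sin y := mul_le_sin (by positivity) hle
  · calc d / π ≤ 2 / π * (π - y) := by rw [div_mul_eq_mul_div]; gcongr; linarith [hy_def]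
      _ ≤ sin (π - y) := mul_le_sin (by linarith) (by linarith [hy_def])
      _ = sin y := sin_pi_sub y

lemma two_mul_div_pi_le_norm_circlePt_sub {s t d : ℝ} (hd : 0 ≤ d) (hlow : d ≤ |s - t|)
    (hup : |s - t| ≤ 2 * π - d) : 2 * d / π ≤ ‖circlePt s - circlePt t‖ := by
  rw [norm_circlePt_sub, mul_div_assoc]
  gcongr
  exact div_pi_le_abs_sin_half hd hlow hup

lemma left_notMem_Ioo_of_disjoint {X : Type*} [LinearOrder X] [DenselyOrdered X]
    {α β γ δ : X} (h : α < β) (hd : Disjoint (Ioo α β) (Ioo γ δ)) : α ∉ Ioo γ δ := by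
  rintro ⟨hγ, hδ⟩
  rw [Ioo_disjoint_Ioo, max_eq_left hγ.le] at hd
  exact (lt_min h hδ).not_ge hd

lemma right_notMem_Ioo_of_disjoint {X : Type*} [LinearOrder X] [DenselyOrdered X]
    {α β γ δ : X} (h : α < β) (hd : Disjoint (Ioo α β) (Ioo γ δ)) : β ∉ Ioo γ δ := by
  rintro ⟨hγ, hδ⟩
  rw [Ioo_disjoint_Ioo, min_eq_left hδ.le] at hd
  exact (max_lt h hγ).not_ge hd

lemma min_sub_le_abs_sub_of_notMem_Ioo {α β s t : ℝ} (ht : t ∈ Ioo α β) (hs : s ∉ Ioo α β) :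
    min (t - α) (β - t) ≤ |s - t| := by
  rw [mem_Ioo, not_and_or, not_lt, not_lt] at hs
  rcases hs with hs | hs
  · rw [abs_sub_comm, abs_of_nonneg (by linarith [ht.1])]
    exact (min_le_left _ _).trans (by linarith)
  · rw [abs_of_nonneg (by linarith [ht.2])]
    exact (min_le_right _ _).trans (by linarith)

lemma two_mul_min_div_pi_le_norm_circlePt_sub {α β s t : ℝ} (hα : 0 ≤ α) (hβ : β ≤ 2 * π)
    (ht : t ∈ Ioo α β) (hs : s ∈ Icc 0 (2 * π) \ Ioo α β) :
    2 * min (t - α) (β - t) / π ≤ ‖circlePt s - circlePt t‖ := by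
  have hlow := min_sub_le_abs_sub_of_notMem_Ioo ht hs.2
  have hmin := min_le_left (t - α) (β - t)
  have hmin' := min_le_right (t - α) (β - t)
  refine two_mul_div_pi_le_norm_circlePt_sub (le_min ?_ ?_) hlow ?_
  · linarith [ht.1]
  · linarith [ht.2]
  · rw [abs_le]; constructor <;> linarith [hs.1.1, hs.1.2, ht.1, ht.2]

lemma ENNReal.tsum_ofReal_eq_top_of_tendsto {c : ℕ → ℝ}
    (h : Tendsto (fun N => ∑ n ∈ Finset.range N, c n) atTop atTop) :
    ∑' n, ENNReal.ofReal (c n) = ⊤ :=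
  top_unique <| le_of_tendsto' (ENNReal.tendsto_ofReal_atTop.comp h) fun _ =>
    (Finset.le_sum_of_subadditive _ ENNReal.ofReal_zero.le (fun _ _ => ENNReal.ofReal_add_le)
      _ _).trans (ENNReal.sum_le_tsum _)

section Arcs

open Function

variable {a b : ℕ → ℝ} {t : ℝ}

noncomputable def potTerm (a b : ℕ → ℝ) (t : ℝ) (n : ℕ) : ℝ :=
  (b n - a n) * (1 / ‖circlePt (a n) - circlePt t‖ ^ 2 + 1 / ‖circlePt (b n) - circlePt t‖ ^ 2)

lemma potTerm_nonneg {n : ℕ} (hab : a n ≤ b n) : 0 ≤ potTerm a b t n :=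
  mul_nonneg (sub_nonneg.2 hab) (by positivity)

lemma potTerm_le {n : ℕ} {C : ℝ} (hC : 0 < C) (hab : a n ≤ b n)
    (ha : C ≤ ‖circlePt (a n) - circlePt t‖) (hb : C ≤ ‖circlePt (b n) - circlePt t‖) :
    potTerm a b t n ≤ (b n - a n) * (2 / C ^ 2) := by
  have hinv : ∀ {r : ℝ}, C ≤ r → 1 / r ^ 2 ≤ 1 / C ^ 2 := fun h =>
    one_div_le_one_div_of_le (by positivity) (pow_le_pow_left₀ hC.le h 2)
  refine mul_le_mul_of_nonneg_left ?_ (sub_nonneg.2 hab)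
  calc _ ≤ 1 / C ^ 2 + 1 / C ^ 2 := add_le_add (hinv ha) (hinv hb)
    _ = 2 / C ^ 2 := by ring

lemma one_div_le_potTerm_self {n : ℕ} (ht : t ∈ Ioo (a n) (b n))
    (hpos : 0 < ‖circlePt (a n) - circlePt t‖) : 1 / (b n - a n) ≤ potTerm a b t n := by
  have hlen : 0 < b n - a n := by linarith [ht.1, ht.2]
  have hchord : ‖circlePt (a n) - circlePt t‖ ≤ b n - a n := by
    refine (norm_circlePt_sub_le _ _).trans ?_
    rw [abs_sub_comm, abs_of_pos (by linarith [ht.1])]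
    linarith [ht.2]
  calc 1 / (b n - a n) = (b n - a n) * (1 / (b n - a n) ^ 2) := by field_simp
    _ ≤ (b n - a n) * (1 / ‖circlePt (a n) - circlePt t‖ ^ 2) := by gcongr
    _ ≤ potTerm a b t n := by
      unfold potTerm; gcongr; exact le_add_of_nonneg_right (by positivity)

lemma endpoints_mem_Icc_diff_arc (hab : ∀ n, a n < b n)
    (hsub : ∀ n, Ioo (a n) (b n) ⊆ Ioo 0 (2 * π))
    (hdisj : Pairwise (Disjoint on fun n => Ioo (a n) (b n))) (m n : ℕ) :
    a n ∈ Icc 0 (2 * π) \ Ioo (a m) (b m) ∧ b n ∈ Icc 0 (2 * π) \ Ioo (a m) (b m) := by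
  obtain ⟨ha, hb⟩ := (Ioo_subset_Ioo_iff (hab n)).1 (hsub n)
  have hout : a n ∉ Ioo (a m) (b m) ∧ b n ∉ Ioo (a m) (b m) := by
    rcases eq_or_ne n m with rfl | hnm
    · simp
    · exact ⟨left_notMem_Ioo_of_disjoint (hab n) (hdisj hnm),
        right_notMem_Ioo_of_disjoint (hab n) (hdisj hnm)⟩
  exact ⟨⟨⟨ha, by linarith [hab n]⟩, hout.1⟩, ⟨⟨by linarith [hab n], hb⟩, hout.2⟩⟩

lemma summable_sub_of_disjoint_Ioo (hab : ∀ n, a n < b n)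
    (hsub : ∀ n, Ioo (a n) (b n) ⊆ Ioo 0 (2 * π))
    (hdisj : Pairwise (Disjoint on fun n => Ioo (a n) (b n))) :
    Summable fun n => b n - a n := by
  have hvol : ∑' n, volume (Ioo (a n) (b n)) ≠ ⊤ := by
    rw [← measure_iUnion hdisj fun n => measurableSet_Ioo]
    exact ((measure_mono (iUnion_subset hsub)).trans_lt measure_Ioo_lt_top).ne
  simpa [Real.volume_Ioo, ENNReal.toReal_ofReal (sub_pos.2 (hab _)).le] using
    ENNReal.summable_toReal hvol

lemma one_div_le_potV (hab : ∀ n, a n < b n)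
    (hsub : ∀ n, Ioo (a n) (b n) ⊆ Ioo 0 (2 * π))
    (hdisj : Pairwise (Disjoint on fun n => Ioo (a n) (b n))) {m : ℕ}
    (ht : t ∈ Ioo (a m) (b m)) : 1 / (b m - a m) ≤ potV a b t := by
  obtain ⟨ham, hbm⟩ := (Ioo_subset_Ioo_iff (hab m)).1 (hsub m)
  set C := 2 * min (t - a m) (b m - t) / π
  have hC : 0 < C := by have := ht.1; have := ht.2; have := pi_pos; positivity
  have hchord : ∀ n, C ≤ ‖circlePt (a n) - circlePt t‖ ∧ C ≤ ‖circlePt (b n) - circlePt t‖ :=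
    fun n => (endpoints_mem_Icc_diff_arc hab hsub hdisj m n).imp
      (two_mul_min_div_pi_le_norm_circlePt_sub ham hbm ht)
      (two_mul_min_div_pi_le_norm_circlePt_sub ham hbm ht)
  have hsum : Summable (potTerm a b t) :=
    .of_nonneg_of_le (fun n => potTerm_nonneg (hab n).le)
      (fun n => potTerm_le hC (hab n).le (hchord n).1 (hchord n).2)
      ((summable_sub_of_disjoint_Ioo hab hsub hdisj).mul_right _)
  calc 1 / (b m - a m) ≤ potTerm a b t m :=
        one_div_le_potTerm_self ht (hC.trans_le (hchord m).1)
    _ ≤ ∑' n, potTerm a b t n := hsum.le_tsum m fun n _ => potTerm_nonneg (hab n).le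
    _ = potV a b t := rfl

lemma ofReal_mul_log_le_setLIntegral_log_potV (hab : ∀ n, a n < b n)
    (hsub : ∀ n, Ioo (a n) (b n) ⊆ Ioo 0 (2 * π))
    (hdisj : Pairwise (Disjoint on fun n => Ioo (a n) (b n))) (m : ℕ) :
    ENNReal.ofReal ((b m - a m) * log (1 / (b m - a m))) ≤
      ∫⁻ t in Ioo (a m) (b m), ENNReal.ofReal (log (potV a b t)) := by
  have hlen : 0 < b m - a m := sub_pos.2 (hab m)
  calc ENNReal.ofReal ((b m - a m) * log (1 / (b m - a m)))
      = ∫⁻ _ in Ioo (a m) (b m), ENNReal.ofReal (log (1 / (b m - a m))) := by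
        rw [setLIntegral_const, Real.volume_Ioo, ENNReal.ofReal_mul hlen.le, mul_comm]
    _ ≤ ∫⁻ t in Ioo (a m) (b m), ENNReal.ofReal (log (potV a b t)) :=
        setLIntegral_mono' measurableSet_Ioo fun t ht => ENNReal.ofReal_le_ofReal <|
          log_le_log (one_div_pos.2 hlen) (one_div_le_potV hab hsub hdisj ht)

end Arcs

theorem stmt_6_general (a b : ℕ → ℝ)
    (hab : ∀ n, a n < b n)
    (hsub : ∀ n, Set.Ioo (a n) (b n) ⊆ Set.Ioo 0 (2 * Real.pi))
    (hdisj : Pairwise (Function.onFun Disjoint fun n => Set.Ioo (a n) (b n)))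
    (hdiv : Filter.Tendsto
      (fun N => ∑ n ∈ Finset.range N, (b n - a n) * Real.log (1 / (b n - a n)))
      Filter.atTop Filter.atTop) :
    ∫⁻ t in Set.Ioo 0 (2 * Real.pi), ENNReal.ofReal (Real.log (potV a b t)) = ⊤ := by
  refine top_unique ?_
  calc ⊤ = ∑' n, ENNReal.ofReal ((b n - a n) * log (1 / (b n - a n))) :=
        (ENNReal.tsum_ofReal_eq_top_of_tendsto hdiv).symm
    _ ≤ ∑' n, ∫⁻ t in Ioo (a n) (b n), ENNReal.ofReal (log (potV a b t)) :=
        ENNReal.tsum_le_tsum (ofReal_mul_log_le_setLIntegral_log_potV hab hsub hdisj)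
    _ = ∫⁻ t in ⋃ n, Ioo (a n) (b n), ENNReal.ofReal (log (potV a b t)) :=
        (lintegral_iUnion (fun n => measurableSet_Ioo) hdisj _).symm
    _ ≤ ∫⁻ t in Ioo 0 (2 * π), ENNReal.ofReal (log (potV a b t)) :=
        lintegral_mono_set (iUnion_subset hsub)

/-- if the complementary arcs (a_n, b_n) of a closed set E ⊂ T satisfy
Σ_n (b_n − a_n) log(1/(b_n − a_n)) = +∞, then ∫_T log V₂(μ)(ζ) |dζ| = +∞ for
μ = Σ_n (b_n − a_n)(δ_{a_n} + δ_{b_n}). -/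
theorem stmt_6 (a b : ℕ → ℝ)
    (hab : ∀ n, a n < b n)
    (hsub : ∀ n, Set.Ioo (a n) (b n) ⊆ Set.Ioo 0 (2 * Real.pi))
    (hsmall : ∀ n, b n - a n < 1)
    (hdisj : Pairwise (Function.onFun Disjoint fun n => Set.Ioo (a n) (b n)))
    (hdiv : Filter.Tendsto
      (fun N => ∑ n ∈ Finset.range N, (b n - a n) * Real.log (1 / (b n - a n)))
      Filter.atTop Filter.atTop) :
    ∫⁻ t in Set.Ioo 0 (2 * Real.pi), ENNReal.ofReal (Real.log (potV a b t)) = ⊤ :=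
  stmt_6_general a b hab hsub hdisj hdiv
end

section
/- Let θ_n = 1/log(n) for n ≥ 3 and a_n = ε(θ_n − θ_{n+1}) for a fixed ε ∈ (0,1). Then Σ_{n≥3} a_n log(1/a_n) = +∞. -/
/-!
Write `a = ε (1/log x - 1/log (x+1))`. Since `log (x+1) - log x` lies between `1/(x+1)` and `1/x`,
we get `a ≤ 1/x`, hence `log (1/a) ≥ log x`, and then
`a log (1/a) ≥ a log x = ε (log (x+1) - log x) / log (x+1) ≥ ε / ((x+1) log (x+1))`.
The series therefore dominates a multiple of `∑ 1/(n log n)`, which diverges by Cauchy condensation.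
-/

open Real Filter

theorem Real.not_summable_inv_natCast_mul_log :
    ¬ Summable (fun n : ℕ => ((n : ℝ) * log n)⁻¹) := by
  have h_nonneg : 0 ≤ᶠ[atTop] fun n : ℕ => ((n : ℝ) * log n)⁻¹ :=
    .of_forall fun n => inv_nonneg.mpr (mul_nonneg n.cast_nonneg (log_natCast_nonneg n))
  have h_anti : ∀ᶠ n : ℕ in atTop, ((n + 1 : ℕ) * log (n + 1 : ℕ) : ℝ)⁻¹ ≤ (n * log n)⁻¹ := by
    filter_upwards [eventually_ge_atTop 2] with n hn
    have hn' : (2 : ℝ) ≤ n := by exact_mod_cast hn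
    have hlog : 0 < log n := log_pos (by linarith)
    have hle : (n : ℝ) ≤ (n + 1 : ℕ) := by push_cast; linarith
    gcongr
  have h_condensed (k : ℕ) :
      (2 : ℝ) ^ k * (((2 ^ k : ℕ) : ℝ) * log (2 ^ k : ℕ))⁻¹ = ((k : ℝ)⁻¹) * (log 2)⁻¹ := by
    push_cast
    rw [log_pow, mul_inv, mul_inv_cancel_left₀ (by positivity), mul_inv]
  rw [← summable_condensed_iff_of_eventually_nonneg h_nonneg h_anti, funext h_condensed,
    summable_mul_right_iff (inv_ne_zero (log_pos one_lt_two).ne')]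
  exact not_summable_natCast_inv

section LogGap

variable {x : ℝ}

theorem Real.inv_add_one_le_log_add_one_sub_log (hx : 0 < x) :
    (x + 1)⁻¹ ≤ log (x + 1) - log x := by
  have h := one_sub_inv_le_log_of_pos (show 0 < (x + 1) / x by positivity)
  rw [log_div (by linarith) hx.ne', inv_div] at h
  have h_eq : 1 - x / (x + 1) = (x + 1)⁻¹ := by field_simp; ring
  linarith

theorem Real.log_add_one_sub_log_le_inv (hx : 0 < x) : log (x + 1) - log x ≤ x⁻¹ := by
  have h := log_le_sub_one_of_pos (show 0 < (x + 1) / x by positivity)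
  rw [log_div (by linarith) hx.ne'] at h
  have h_eq : (x + 1) / x - 1 = x⁻¹ := by field_simp; ring
  linarith

theorem Real.one_div_log_sub_one_div_log_add_one (hx : 1 < x) :
    1 / log x - 1 / log (x + 1) = (log (x + 1) - log x) / (log x * log (x + 1)) := by
  have h₁ : 0 < log x := log_pos hx
  have h₂ : 0 < log (x + 1) := log_pos (by linarith)
  field_simp

theorem Real.one_div_log_sub_one_div_log_add_one_pos (hx : 1 < x) :
    0 < 1 / log x - 1 / log (x + 1) := by
  rw [one_div_log_sub_one_div_log_add_one hx]
  have h₁ : 0 < log x := log_pos hx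
  have h₂ : 0 < log (x + 1) := log_pos (by linarith)
  have h₃ := inv_add_one_le_log_add_one_sub_log (by linarith : 0 < x)
  exact div_pos (by linarith [inv_pos.mpr (by linarith : 0 < x + 1)]) (by positivity)

theorem Real.one_div_log_sub_one_div_log_add_one_le (hx : exp 1 ≤ x) :
    1 / log x - 1 / log (x + 1) ≤ x⁻¹ := by
  have hx₀ : 0 < x := (exp_pos 1).trans_le hx
  have hx₁ : 1 < x := (one_lt_exp_iff.mpr one_pos).trans_le hx
  have h₁ : 1 ≤ log x := (le_log_iff_exp_le hx₀).mpr hx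
  have h₂ : log x ≤ log (x + 1) := log_le_log hx₀ (by linarith)
  rw [one_div_log_sub_one_div_log_add_one hx₁]
  calc (log (x + 1) - log x) / (log x * log (x + 1))
      ≤ log (x + 1) - log x := div_le_self (by linarith) (by nlinarith)
    _ ≤ x⁻¹ := log_add_one_sub_log_le_inv hx₀

theorem Real.inv_mul_log_le_one_div_log_sub_one_div_log_add_one_mul_log (hx : 1 < x) :
    ((x + 1) * log (x + 1))⁻¹ ≤ (1 / log x - 1 / log (x + 1)) * log x := by
  have h₁ : 0 < log x := log_pos hx
  have h₂ : 0 < log (x + 1) := log_pos (by linarith)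
  have h_eq : (1 / log x - 1 / log (x + 1)) * log x = (log (x + 1) - log x) / log (x + 1) := by
    field_simp
  rw [h_eq, mul_inv, ← div_eq_mul_inv]
  gcongr
  exact inv_add_one_le_log_add_one_sub_log (by linarith)

theorem Real.div_mul_log_le_mul_log_one_div {ε : ℝ} (hε₀ : 0 < ε) (hε₁ : ε ≤ 1)
    (hx : exp 1 ≤ x) :
    ε / ((x + 1) * log (x + 1)) ≤
      (ε * (1 / log x - 1 / log (x + 1))) * log (1 / (ε * (1 / log x - 1 / log (x + 1)))) := by
  have hx₀ : 0 < x := (exp_pos 1).trans_le hx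
  have hx₁ : 1 < x := (one_lt_exp_iff.mpr one_pos).trans_le hx
  set d := 1 / log x - 1 / log (x + 1)
  have hd₀ : 0 < d := one_div_log_sub_one_div_log_add_one_pos hx₁
  have ha₀ : 0 < ε * d := mul_pos hε₀ hd₀
  have ha_le : ε * d ≤ x⁻¹ :=
    (mul_le_of_le_one_left hd₀.le hε₁).trans (one_div_log_sub_one_div_log_add_one_le hx)
  have h_log : log x ≤ log (1 / (ε * d)) :=
    log_le_log hx₀ (by rw [one_div, le_inv_comm₀ hx₀ ha₀]; exact ha_le)
  calc ε / ((x + 1) * log (x + 1))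
      ≤ ε * (d * log x) := by
        rw [div_eq_mul_inv]
        gcongr
        exact inv_mul_log_le_one_div_log_sub_one_div_log_add_one_mul_log hx₁
    _ = ε * d * log x := by ring
    _ ≤ ε * d * log (1 / (ε * d)) := by gcongr

end LogGap

/-- with θ_n = 1/log n (n ≥ 3) and a_n = ε(θ_n − θ_{n+1}) for fixed
ε ∈ (0,1), one has Σ_{n≥3} a_n log(1/a_n) = +∞ (the partial sums tend to +∞). -/
theorem stmt_8 (ε : ℝ) (hε0 : 0 < ε) (hε1 : ε < 1) :
    Filter.Tendsto (fun N : ℕ => ∑ n ∈ Finset.range N,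
      (ε * (1 / Real.log ((n : ℝ) + 3) - 1 / Real.log ((n : ℝ) + 4))) *
        Real.log (1 / (ε * (1 / Real.log ((n : ℝ) + 3) - 1 / Real.log ((n : ℝ) + 4)))))
      Filter.atTop Filter.atTop := by
  have h_lower (n : ℕ) : ε * (((n + 4 : ℕ) : ℝ) * log (n + 4 : ℕ))⁻¹ ≤
      (ε * (1 / log ((n : ℝ) + 3) - 1 / log ((n : ℝ) + 4))) *
        log (1 / (ε * (1 / log ((n : ℝ) + 3) - 1 / log ((n : ℝ) + 4)))) := by
    have hx : exp 1 ≤ (n : ℝ) + 3 := by linarith [exp_one_lt_d9, n.cast_nonneg (α := ℝ)]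
    have h := div_mul_log_le_mul_log_one_div hε0 hε1.le hx
    rw [show (n : ℝ) + 3 + 1 = n + 4 by ring] at h
    push_cast
    exact h
  have h_lower_nonneg (n : ℕ) : 0 ≤ ε * (((n + 4 : ℕ) : ℝ) * log (n + 4 : ℕ))⁻¹ := by
    have := log_natCast_nonneg (n + 4)
    positivity
  rw [← not_summable_iff_tendsto_nat_atTop_of_nonneg fun n => (h_lower_nonneg n).trans (h_lower n)]
  intro h_summable
  have h_harmonic_log := (h_summable.of_nonneg_of_le h_lower_nonneg h_lower).mul_left ε⁻¹
  simp only [inv_mul_cancel_left₀ hε0.ne'] at h_harmonic_log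
  exact not_summable_inv_natCast_mul_log
    ((summable_nat_add_iff (f := fun n : ℕ => ((n : ℝ) * log n)⁻¹) 4).mp h_harmonic_log)
end

section
/- Let a ∈ (0, 1/2) and for r with 1 − r < a define k_r by 1 − r = a^{k_r} (so k_r = log(1−r)/log a > 1). Then the sum Σ_{k ≥ 2} a(1−r)²/(k²((1−r)² + a^{2k})) is comparable, with absolute constants, to a·log(1/a)/log(1/(1−r)). -/
/-!
Write ε = 1 - r, κ = log ε / log a > 1 and m = ⌊κ⌋, so that a^(m+1) ≤ ε ≤ a^m.
The k-th term is at most a/k², and at least a/(2k²) once a^k ≤ ε: the m terms with m + 2 ≤ k < 2m + 2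
give at least a/(18m), and the tail k > m gives at most a/m. For 2 ≤ k ≤ m the term is at most
a ε²/(k a^k)², and since k ↦ k a^k decreases for a ≤ 1/2 it is at most a ε²/(m a^m)² ≤ a/m²;
there are fewer than m of them. Hence the sum is comparable to a/m, i.e. to a/κ.
-/

open Real Finset

section LogRatio

variable {a ε : ℝ}

lemma pow_le_iff_log_div_log_le (ha : 0 < a) (ha1 : a < 1) (hε : 0 < ε) (n : ℕ) :
    a ^ n ≤ ε ↔ log ε / log a ≤ n := by
  rw [div_le_iff_of_neg (log_neg ha ha1), ← log_pow, log_le_log_iff (by positivity) hε]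

lemma le_pow_iff_le_log_div_log (ha : 0 < a) (ha1 : a < 1) (hε : 0 < ε) (n : ℕ) :
    ε ≤ a ^ n ↔ n ≤ log ε / log a := by
  rw [le_div_iff_of_neg (log_neg ha ha1), ← log_pow, log_le_log_iff hε (by positivity)]

end LogRatio

lemma natCast_mul_pow_antitoneOn {a : ℝ} (ha : 0 ≤ a) (ha2 : a ≤ 1 / 2) :
    AntitoneOn (fun n : ℕ => (n : ℝ) * a ^ n) {n | 1 ≤ n} := by
  refine antitoneOn_nat_Ici_of_succ_le fun n hn => ?_
  have hn' : (1 : ℝ) ≤ n := by exact_mod_cast hn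
  calc ((n + 1 : ℕ) : ℝ) * a ^ (n + 1) = ((n + 1) * a) * a ^ n := by push_cast; ring
    _ ≤ n * a ^ n := by gcongr; nlinarith

lemma summable_inv_sq_nat_add (j : ℕ) : Summable fun n : ℕ => (((n + j : ℕ) : ℝ) ^ 2)⁻¹ :=
  (summable_nat_add_iff j).2 (Real.summable_nat_pow_inv.2 one_lt_two)

lemma tsum_inv_sq_nat_add_le {m : ℕ} (hm : m ≠ 0) :
    ∑' n : ℕ, (((n + (m + 1) : ℕ) : ℝ) ^ 2)⁻¹ ≤ (m : ℝ)⁻¹ := by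
  refine Real.tsum_le_of_sum_range_le (fun _ => by positivity) fun N => ?_
  have hIoc : ∑ n ∈ range N, (((n + (m + 1) : ℕ) : ℝ) ^ 2)⁻¹ =
      ∑ i ∈ Ioc m (m + N), ((i : ℝ) ^ 2)⁻¹ := by
    rw [← Finset.Ico_add_one_add_one_eq_Ioc, sum_Ico_eq_sum_range]
    refine sum_congr (by congr 1; omega) fun n _ => ?_
    congr 3; omega
  rw [hIoc]
  refine (sum_Ioc_inv_sq_le_sub hm (by omega)).trans ?_
  simp only [sub_le_self_iff, inv_nonneg, Nat.cast_nonneg]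

section Summand

variable {a ε : ℝ}

noncomputable def summand (a ε : ℝ) (k : ℕ) : ℝ := a * ε ^ 2 / ((k : ℝ) ^ 2 * (ε ^ 2 + a ^ (2 * k)))

lemma summand_nonneg (ha : 0 ≤ a) (k : ℕ) : 0 ≤ summand a ε k := by
  unfold summand; positivity

lemma summand_le_div_sq (ha : 0 ≤ a) (k : ℕ) : summand a ε k ≤ a / (k : ℝ) ^ 2 := by
  have hfrac : ε ^ 2 / (ε ^ 2 + a ^ (2 * k)) ≤ 1 :=
    div_le_one_of_le₀ (le_add_of_nonneg_right (by positivity)) (by positivity)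
  calc summand a ε k = a / (k : ℝ) ^ 2 * (ε ^ 2 / (ε ^ 2 + a ^ (2 * k))) := by
        unfold summand; rw [div_mul_div_comm]
    _ ≤ a / (k : ℝ) ^ 2 := mul_le_of_le_one_right (by positivity) hfrac

lemma summable_summand_nat_add (ha : 0 ≤ a) (j : ℕ) :
    Summable fun n : ℕ => summand a ε (n + j) := by
  refine ((summable_inv_sq_nat_add j).mul_left a).of_nonneg_of_le
    (fun n => summand_nonneg ha _) fun n => ?_
  exact (summand_le_div_sq ha _).trans_eq (div_eq_mul_inv _ _)

lemma div_two_mul_sq_le_summand (ha : 0 ≤ a) (hε : 0 < ε) {k : ℕ} (hk : k ≠ 0)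
    (hpow : a ^ k ≤ ε) : a / (2 * (k : ℝ) ^ 2) ≤ summand a ε k := by
  have hsq : a ^ (2 * k) ≤ ε ^ 2 := by
    rw [pow_mul']; exact pow_le_pow_left₀ (by positivity) hpow 2
  calc a / (2 * (k : ℝ) ^ 2) = a * ε ^ 2 / ((k : ℝ) ^ 2 * (ε ^ 2 + ε ^ 2)) := by
        field_simp; ring
    _ ≤ summand a ε k := by unfold summand; gcongr

lemma summand_le_div_sq_of_le_pow (ha : 0 < a) (ha2 : a ≤ 1 / 2) (hε : 0 < ε) {k m : ℕ}
    (hk : 1 ≤ k) (hkm : k ≤ m) (hεm : ε ≤ a ^ m) : summand a ε k ≤ a / (m : ℝ) ^ 2 := by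
  have hm : (0 : ℝ) < m := by exact_mod_cast hk.trans hkm
  have hmono : (m : ℝ) * ε ≤ k * a ^ k :=
    (mul_le_mul_of_nonneg_left hεm hm.le).trans
      (natCast_mul_pow_antitoneOn ha.le ha2 hk
        (hk.trans hkm) hkm)
  calc summand a ε k ≤ a * ε ^ 2 / ((k : ℝ) * a ^ k) ^ 2 := by
        unfold summand
        rw [mul_pow, ← pow_mul, mul_comm k 2]
        gcongr
        exact le_add_of_nonneg_left (by positivity)
    _ ≤ a * ε ^ 2 / ((m : ℝ) * ε) ^ 2 := by gcongr
    _ = a / (m : ℝ) ^ 2 := by field_simp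

end Summand

section Sum

variable {a ε : ℝ}

lemma div_le_tsum_summand (ha : 0 ≤ a) (ha1 : a ≤ 1) (hε : 0 < ε) {m : ℕ}
    (hpow : a ^ (m + 1) ≤ ε) : a / (18 * m) ≤ ∑' n : ℕ, summand a ε (n + 2) := by
  have hterm : ∀ n ∈ Ico m (2 * m), a / (18 * (m : ℝ) ^ 2) ≤ summand a ε (n + 2) := by
    intro n hn
    obtain ⟨hmn, hn2m⟩ := mem_Ico.1 hn
    have hk : ((n + 2 : ℕ) : ℝ) ≤ 3 * m := by norm_cast; omega
    calc a / (18 * (m : ℝ) ^ 2) = a / (2 * (3 * m) ^ 2) := by ring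
      _ ≤ a / (2 * ((n + 2 : ℕ) : ℝ) ^ 2) := by gcongr
      _ ≤ summand a ε (n + 2) := div_two_mul_sq_le_summand ha hε (by omega)
          ((pow_le_pow_of_le_one ha ha1 (by omega)).trans hpow)
  have hsum := card_nsmul_le_sum _ _ _ hterm
  rw [Nat.card_Ico, show 2 * m - m = m by omega, nsmul_eq_mul] at hsum
  calc a / (18 * m) = m * (a / (18 * (m : ℝ) ^ 2)) := by
        rcases eq_or_ne m 0 with rfl | hm
        · simp
        · field_simp
    _ ≤ _ := hsum.trans ((summable_summand_nat_add ha 2).sum_le_tsum _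
        fun n _ => summand_nonneg ha _)

lemma tsum_summand_le (ha : 0 < a) (ha2 : a ≤ 1 / 2) (hε : 0 < ε) {m : ℕ} (hm : 1 ≤ m)
    (hεm : ε ≤ a ^ m) : ∑' n : ℕ, summand a ε (n + 2) ≤ 2 * a / m := by
  obtain ⟨j, rfl⟩ : ∃ j, m = j + 1 := ⟨m - 1, by omega⟩
  have hhead : ∑ n ∈ range j, summand a ε (n + 2) ≤ a / (j + 1 : ℕ) := by
    have h := sum_le_card_nsmul (range j) (fun n => summand a ε (n + 2)) _ fun n hn =>
      summand_le_div_sq_of_le_pow ha ha2 hε (by omega) (by simp at hn; omega) hεm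
    rw [card_range, nsmul_eq_mul] at h
    refine h.trans ?_
    have hj : (0 : ℝ) < (j + 1 : ℕ) := by positivity
    rw [mul_div, div_le_div_iff₀ (by positivity) hj]
    push_cast
    nlinarith
  have htail : ∑' n : ℕ, summand a ε (n + j + 2) ≤ a / (j + 1 : ℕ) := by
    calc ∑' n : ℕ, summand a ε (n + j + 2)
        ≤ ∑' n : ℕ, a * (((n + (j + 2) : ℕ) : ℝ) ^ 2)⁻¹ := by
          refine (summable_summand_nat_add ha.le (j + 2)).tsum_le_tsum (fun n => ?_)
            ((summable_inv_sq_nat_add _).mul_left a)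
          exact (summand_le_div_sq ha.le _).trans_eq (div_eq_mul_inv _ _)
      _ ≤ a / (j + 1 : ℕ) := by
          rw [tsum_mul_left, div_eq_mul_inv]
          exact mul_le_mul_of_nonneg_left (tsum_inv_sq_nat_add_le (by omega)) ha.le
  rw [← (summable_summand_nat_add ha.le 2).sum_add_tsum_nat_add j]
  calc _ ≤ a / (j + 1 : ℕ) + a / (j + 1 : ℕ) := add_le_add hhead htail
    _ = 2 * a / (j + 1 : ℕ) := by ring

end Sum

/-- for a ∈ (0,1/2) and r with 1 − r < a, the sum
Σ_{k≥2} a(1−r)²/(k²((1−r)² + a^{2k})) is comparable with absolute constants to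
a·log(1/a)/log(1/(1−r)). -/
theorem stmt_14 : ∃ c C : ℝ, 0 < c ∧ 0 < C ∧
    ∀ a r : ℝ, 0 < a → a < 1 / 2 → 1 - a < r → r < 1 →
    c * (a * Real.log (1 / a) / Real.log (1 / (1 - r))) ≤
      (∑' k : ℕ, a * (1 - r) ^ 2 /
        ((k + 2 : ℝ) ^ 2 * ((1 - r) ^ 2 + a ^ (2 * (k + 2))))) ∧
    (∑' k : ℕ, a * (1 - r) ^ 2 /
        ((k + 2 : ℝ) ^ 2 * ((1 - r) ^ 2 + a ^ (2 * (k + 2))))) ≤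
      C * (a * Real.log (1 / a) / Real.log (1 / (1 - r))) := by
  refine ⟨1 / 18, 4, by norm_num, by norm_num, fun a r ha ha2 hra hr1 => ?_⟩
  have ha1 : a < 1 := by linarith
  have hε : 0 < 1 - r := by linarith
  set κ := log (1 - r) / log a with hκ
  have hκ1 : 1 < κ := (one_lt_div_of_neg (log_neg ha ha1)).2 (log_lt_log hε (by linarith))
  have hratio : a * log (1 / a) / log (1 / (1 - r)) = a / κ := by
    rw [one_div, one_div, log_inv, log_inv, hκ, div_div_eq_mul_div, mul_neg, neg_div_neg_eq]
  have hsummand : (fun k : ℕ => a * (1 - r) ^ 2 /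
      ((k + 2 : ℝ) ^ 2 * ((1 - r) ^ 2 + a ^ (2 * (k + 2))))) =
      fun n => summand a (1 - r) (n + 2) := by
    ext n; simp [summand]
  set m := ⌊κ⌋₊
  have hm : 1 ≤ m := Nat.le_floor (by exact_mod_cast hκ1.le)
  have hmκ : (m : ℝ) ≤ κ := Nat.floor_le (by linarith)
  have hκm : κ < m + 1 := Nat.lt_floor_add_one κ
  have hm1 : (1 : ℝ) ≤ m := by exact_mod_cast hm
  rw [hsummand, hratio]
  constructor
  · calc 1 / 18 * (a / κ) ≤ a / (18 * m) := by
          rw [one_div_mul_eq_div, div_div, mul_comm]; gcongr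
      _ ≤ _ := div_le_tsum_summand ha.le ha1.le hε
          ((pow_le_iff_log_div_log_le ha ha1 hε _).2 (by push_cast; linarith))
  · calc _ ≤ 2 * a / m := tsum_summand_le ha ha2.le hε hm
          ((le_pow_iff_le_log_div_log ha ha1 hε _).2 hmκ)
      _ ≤ 4 * (a / κ) := by
          rw [mul_div_assoc', div_le_div_iff₀ (by positivity) (by positivity)]
          nlinarith
end
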